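/- Let P = { y in R^3 : A y ≤ b } be a polytope (A an n×3 matrix, b in R^n) and let ℓ = N_{p,r}(x,d,l,u) be a finite needle with p ≥ 1, r > 0, and let ε > 0. Suppose there exist w^1 in R^n with w^1 ≥ 0, w^2 in R^3, and nonnegative scalars w^3, w^4, w^5 satisfying: b·w^1 + x·w^2 - l w^3 + u w^4 + r w^5 ≤ -ε; Aᵀ w^1 + w^2 = 0; -d·w^2 - w^3 + w^4 = 0; ||w^2||_q ≤ w^5 (where 1/p + 1/q = 1). Then ℓ ∩ P = ∅. -/

import Mathlib

open scoped ENNReal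

/-- The `p`-norm of a vector in ℝ³, with `p = ∞` allowed. -/
noncomputable def pnorm (p : ℝ≥0∞) (v : Fin 3 → ℝ) : ℝ :=
  if p = ⊤ then max (max |v 0| |v 1|) |v 2|
  else (∑ i, |v i| ^ p.toReal) ^ (1 / p.toReal)

/-- The needle `N_{p,r}(x,d,l,u)`. -/
def needle (p : ℝ≥0∞) (r : ℝ) (x d : Fin 3 → ℝ) (l u : ℝ) : Set (Fin 3 → ℝ) :=
  {χ | ∃ τ ρ, l ≤ τ ∧ τ ≤ u ∧ pnorm p ρ ≤ r ∧ χ = x + τ • d + ρ}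

/-- Euclidean inner product on ℝ³. -/
def dot (v w : Fin 3 → ℝ) : ℝ :=
  ∑ i, v i * w i

open scoped Matrix

/-!
Weak duality. For `y` in the polytope, `Aᵀ w¹ + w² = 0` and `w¹ ≥ 0` give
`w² · y = -w¹ · (A y) ≥ -b · w¹`. For `y = x + τ d + ρ` in the needle, Hölder's
inequality and `d · w² = w⁴ - w³` give `w² · y ≤ x · w² - l w³ + u w⁴ + r w⁵`.
Both bounds together contradict `b · w¹ + x · w² - l w³ + u w⁴ + r w⁵ ≤ -ε < 0`.
-/

lemma dot_eq_dotProduct (v w : Fin 3 → ℝ) : dot v w = v ⬝ᵥ w := rfl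

lemma dot_comm (v w : Fin 3 → ℝ) : dot v w = dot w v := dotProduct_comm v w

lemma pnorm_nonneg (p : ℝ≥0∞) (v : Fin 3 → ℝ) : 0 ≤ pnorm p v := by
  unfold pnorm
  split <;> positivity

lemma abs_le_pnorm_top (v : Fin 3 → ℝ) (i : Fin 3) : |v i| ≤ pnorm ⊤ v := by
  fin_cases i <;> simp [pnorm]

lemma pnorm_one (v : Fin 3 → ℝ) : pnorm 1 v = ∑ i, |v i| := by
  simp [pnorm]

lemma dot_le_pnorm_top_mul_pnorm_one (v w : Fin 3 → ℝ) :
    dot v w ≤ pnorm ⊤ v * pnorm 1 w := by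
  rw [pnorm_one, Finset.mul_sum]
  refine Finset.sum_le_sum fun i _ => ?_
  calc v i * w i ≤ |v i| * |w i| := by rw [← abs_mul]; exact le_abs_self _
    _ ≤ pnorm ⊤ v * |w i| := by gcongr; exact abs_le_pnorm_top v i

lemma dot_le_pnorm_mul_pnorm (p q : ℝ≥0∞) [p.HolderConjugate q] (v w : Fin 3 → ℝ) :
    dot v w ≤ pnorm p v * pnorm q w := by
  rcases eq_or_ne p ⊤ with rfl | hp
  · rw [(ENNReal.HolderConjugate.eq_top_iff_eq_one ⊤ q).mp rfl]
    exact dot_le_pnorm_top_mul_pnorm_one v w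
  rcases eq_or_ne q ⊤ with rfl | hq
  · rw [(ENNReal.HolderConjugate.eq_top_iff_eq_one ⊤ p).mp rfl, dot_comm, mul_comm]
    exact dot_le_pnorm_top_mul_pnorm_one w v
  simpa [dot, pnorm, hp, hq] using
    Real.inner_le_Lp_mul_Lq Finset.univ v w (ENNReal.HolderConjugate.toReal_of_ne_top hp hq)

lemma dotProduct_mulVec_transpose_le {m ι : Type*} [Fintype m] [Fintype ι]
    (A : Matrix m ι ℝ) {b w : m → ℝ} {y : ι → ℝ} (hw : 0 ≤ w) (hy : A *ᵥ y ≤ b) :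
    (Aᵀ *ᵥ w) ⬝ᵥ y ≤ b ⬝ᵥ w := by
  rw [Matrix.mulVec_transpose, ← Matrix.dotProduct_mulVec, dotProduct_comm b]
  exact dotProduct_le_dotProduct_of_nonneg_left hy hw

lemma dot_le_of_mem_needle {p q : ℝ≥0∞} [p.HolderConjugate q] {r l u w3 w4 w5 : ℝ}
    {x d w2 y : Fin 3 → ℝ} (hy : y ∈ needle p r x d l u) (hw3 : 0 ≤ w3) (hw4 : 0 ≤ w4)
    (heqd : -dot d w2 - w3 + w4 = 0) (hcone : pnorm q w2 ≤ w5) :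
    dot y w2 ≤ dot x w2 - l * w3 + u * w4 + r * w5 := by
  obtain ⟨τ, ρ, hlτ, hτu, hρ, rfl⟩ := hy
  have hsplit : dot (x + τ • d + ρ) w2 = dot x w2 + τ * dot d w2 + dot ρ w2 := by
    simp only [dot_eq_dotProduct, add_dotProduct, smul_dotProduct, smul_eq_mul]
  have hρw2 : dot ρ w2 ≤ r * w5 :=
    (dot_le_pnorm_mul_pnorm p q ρ w2).trans
      (mul_le_mul hρ hcone (pnorm_nonneg q w2) ((pnorm_nonneg p ρ).trans hρ))
  have hτ3 : l * w3 ≤ τ * w3 := mul_le_mul_of_nonneg_right hlτ hw3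
  have hτ4 : τ * w4 ≤ u * w4 := mul_le_mul_of_nonneg_right hτu hw4
  have hdw2 : dot d w2 = w4 - w3 := by linarith
  rw [hsplit, hdw2, mul_sub]
  linarith

theorem needle_polytope_disjoint_general (n : ℕ) (A : Matrix (Fin n) (Fin 3) ℝ)
    (b : Fin n → ℝ) (p q : ℝ≥0∞)
    (hpq : 1 / p + 1 / q = 1) (r : ℝ) (ε : ℝ) (hε : 0 < ε)
    (x d : Fin 3 → ℝ) (l u : ℝ)
    (w1 : Fin n → ℝ) (hw1 : ∀ k, 0 ≤ w1 k) (w2 : Fin 3 → ℝ)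
    (w3 w4 w5 : ℝ) (hw3 : 0 ≤ w3) (hw4 : 0 ≤ w4)
    (hineq : (∑ k, b k * w1 k) + dot x w2 - l * w3 + u * w4 + r * w5 ≤ -ε)
    (heqA : ∀ i, (∑ k, A k i * w1 k) + w2 i = 0)
    (heqd : -dot d w2 - w3 + w4 = 0)
    (hcone : pnorm q w2 ≤ w5) :
    needle p r x d l u ∩ {y : Fin 3 → ℝ | ∀ k, ∑ i, A k i * y i ≤ b k} = ∅ := by
  have : p.HolderConjugate q := ENNReal.holderConjugate_iff.mpr (by simpa only [one_div] using hpq)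
  rw [Set.eq_empty_iff_forall_notMem]
  rintro y ⟨hyN, hyP⟩
  have hw2 : w2 = -(Aᵀ *ᵥ w1) := funext fun i => eq_neg_of_add_eq_zero_right (heqA i)
  have hpoly : (Aᵀ *ᵥ w1) ⬝ᵥ y ≤ b ⬝ᵥ w1 := dotProduct_mulVec_transpose_le A hw1 hyP
  have hneedle := dot_le_of_mem_needle hyN hw3 hw4 heqd hcone
  have hyw2 : dot y w2 = -((Aᵀ *ᵥ w1) ⬝ᵥ y) := by
    rw [dot_comm, dot_eq_dotProduct, hw2, neg_dotProduct]
  change b ⬝ᵥ w1 + dot x w2 - l * w3 + u * w4 + r * w5 ≤ -ε at hineq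
  linarith

theorem needle_polytope_disjoint (n : ℕ) (A : Matrix (Fin n) (Fin 3) ℝ)
    (b : Fin n → ℝ) (p q : ℝ≥0∞) (hp : 1 ≤ p) (hq : 1 ≤ q)
    (hpq : 1 / p + 1 / q = 1) (r : ℝ) (hr : 0 < r) (ε : ℝ) (hε : 0 < ε)
    (x d : Fin 3 → ℝ) (l u : ℝ) (hlu : l ≤ u)
    (w1 : Fin n → ℝ) (hw1 : ∀ k, 0 ≤ w1 k) (w2 : Fin 3 → ℝ)
    (w3 w4 w5 : ℝ) (hw3 : 0 ≤ w3) (hw4 : 0 ≤ w4) (hw5 : 0 ≤ w5)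
    (hineq : (∑ k, b k * w1 k) + dot x w2 - l * w3 + u * w4 + r * w5 ≤ -ε)
    (heqA : ∀ i, (∑ k, A k i * w1 k) + w2 i = 0)
    (heqd : -dot d w2 - w3 + w4 = 0)
    (hcone : pnorm q w2 ≤ w5) :
    needle p r x d l u ∩ {y : Fin 3 → ℝ | ∀ k, ∑ i, A k i * y i ≤ b k} = ∅ :=
  needle_polytope_disjoint_general n A b p q hpq r ε hε x d l u w1 hw1 w2 w3 w4 w5 hw3 hw4 hineq
    heqA heqd hcone
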